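/- Fix a real β > −1 and integers n, k with 0 ≤ k and k + 1 ≤ n. Then for every real α > −1 and all reals x > 0 and y, the function α ↦ P^{(α,β)}_{n,k}(x,y) (Laguerre–Jacobi Koornwinder polynomial) is differentiable at α with derivative ∑_{s=0}^{n−k−1} (1/(n−k−s)) · P^{(α,β)}_{k+s,k}(x,y). -/

import Mathlib

open Finset MeasureTheory Real

/-- Pochhammer symbol `(a)_m = a (a+1) ⋯ (a+m-1)`. -/
noncomputable def poch (a : ℝ) (m : ℕ) : ℝ := ∏ i ∈ Finset.range m, (a + i)

/-- Jacobi polynomial `P_n^{(α,β)}(x)`. -/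
noncomputable def jacobiP (α β : ℝ) (n : ℕ) (x : ℝ) : ℝ :=
  ∑ i ∈ Finset.range (n + 1),
    poch (α + i + 1) (n - i) * poch (n + α + β + 1) i /
      ((Nat.factorial (n - i) : ℝ) * (Nat.factorial i : ℝ)) * ((x - 1) / 2) ^ i

/-- Generalized Laguerre polynomial `L_n^{(α)}(x)`. -/
noncomputable def laguerreL (α : ℝ) (n : ℕ) (x : ℝ) : ℝ :=
  ∑ i ∈ Finset.range (n + 1),
    poch (α + i + 1) (n - i) / ((Nat.factorial (n - i) : ℝ) * (Nat.factorial i : ℝ)) * (-x) ^ i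

/-- Laguerre–Jacobi Koornwinder polynomial
`P^{(α,β)}_{n,k}(x,y) = L^{(α+2k+1)}_{n-k}(x) · x^k · P^{(β,0)}_k(y/x)`. -/
noncomputable def ljP (α β : ℝ) (n k : ℕ) (x y : ℝ) : ℝ :=
  laguerreL (α + 2 * k + 1) (n - k) x * x ^ k * jacobiP β 0 k (y / x)

/-! The coefficient `c_m(a) = (a)_m / m!` has `a`-derivative `∑_{t<m} c_t(a)/(m - t)`: this closed
form is compatible with `c_{m+1}(a) = c_m(a)(a + m)/(m + 1)` because `(t + 1) c_{t+1} = (a + t) c_t`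
makes the difference of the two sides telescope. Applied to the coefficients `c_{n-i}(a + i + 1)`
of `L_n^{(a)}`, and regrouped by `s = i + t`, this gives `∂_a L_n^{(a)} = ∑_{s<n} L_s^{(a)}/(n - s)`.
Only the Laguerre factor of `P^{(α,β)}_{n,k}` depends on `α`, and `P^{(α,β)}_{k+s,k}` carries the
factor `L_s^{(α+2k+1)}`. -/

lemma poch_succ (a : ℝ) (m : ℕ) : poch a (m + 1) = poch a m * (a + m) :=
  prod_range_succ _ _

lemma succ_mul_poch_succ_div_factorial (a : ℝ) (t : ℕ) :
    poch a (t + 1) / (t + 1).factorial * (t + 1) = poch a t / t.factorial * (a + t) := by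
  rw [poch_succ, Nat.factorial_succ]
  push_cast
  field_simp

/-- With `c t = (a)_t / t!`, this says that the closed form in `hasDerivAt_poch_div_factorial`
obeys the product rule for `c_{m+1}(a) = c_m(a) · (a + m)/(m + 1)`. -/
lemma sum_div_sub_succ_of_succ_mul_eq {c : ℕ → ℝ} {a : ℝ} (hc0 : c 0 = 1)
    (hc : ∀ t : ℕ, c (t + 1) * (t + 1) = c t * (a + t)) (m : ℕ) :
    ∑ t ∈ range (m + 1), c t / ((m + 1 : ℕ) - t) =
      (∑ t ∈ range m, c t / ((m : ℝ) - t)) * ((a + m) / (m + 1)) + c m / (m + 1) := by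
  have hterm : ∀ t ∈ range m, c (t + 1) / ((m + 1 : ℕ) - (t + 1 : ℕ)) =
      (c (t + 1) - c t) / (m + 1) + c t / ((m : ℝ) - t) * ((a + m) / (m + 1)) := by
    intro t ht
    have hmt : (m : ℝ) - t ≠ 0 := sub_ne_zero.2 (by exact_mod_cast (mem_range.1 ht).ne')
    push_cast
    rw [show (m : ℝ) + 1 - (t + 1) = m - t by ring]
    field_simp
    linear_combination hc t
  rw [sum_range_succ', sum_congr rfl hterm, sum_add_distrib, ← sum_div, sum_range_sub, ← sum_mul,
    hc0]
  push_cast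
  ring

lemma hasDerivAt_poch_div_factorial (m : ℕ) (a : ℝ) :
    HasDerivAt (fun b => poch b m / m.factorial)
      (∑ t ∈ range m, poch a t / t.factorial / ((m : ℝ) - t)) a := by
  induction m with
  | zero => simpa [poch] using hasDerivAt_const a (1 : ℝ)
  | succ m ih =>
    have hsplit : (fun b => poch b (m + 1) / (m + 1).factorial) =
        fun b => poch b m / m.factorial * ((b + m) / (m + 1)) := by
      ext b
      rw [poch_succ, Nat.factorial_succ]
      push_cast
      field_simp
    rw [hsplit, sum_div_sub_succ_of_succ_mul_eq (by simp [poch]) (succ_mul_poch_succ_div_factorial a)]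
    exact (ih.fun_mul (((hasDerivAt_id' a).add_const (m : ℝ)).div_const ((m : ℝ) + 1))).congr_deriv
      (by ring)

lemma laguerreL_eq_sum (a : ℝ) (n : ℕ) (x : ℝ) :
    laguerreL a n x = ∑ i ∈ range (n + 1),
      poch (a + i + 1) (n - i) / (n - i).factorial * ((-x) ^ i / i.factorial) := by
  unfold laguerreL
  refine sum_congr rfl fun i _ => ?_
  ring

theorem hasDerivAt_laguerreL (n : ℕ) (x a : ℝ) :
    HasDerivAt (fun b => laguerreL b n x)
      (∑ s ∈ range n, 1 / ((n : ℝ) - s) * laguerreL a s x) a := by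
  set w : ℕ → ℝ := fun i => (-x) ^ i / i.factorial
  set c : ℕ → ℕ → ℝ := fun i t => poch (a + i + 1) t / t.factorial / (((n - i : ℕ) : ℝ) - t)
  have hterm : ∀ i ∈ range (n + 1),
      HasDerivAt (fun b => poch (b + i + 1) (n - i) / (n - i).factorial * w i)
        ((∑ t ∈ range (n - i), c i t) * w i) a := fun i _ =>
    (((hasDerivAt_poch_div_factorial (n - i) (a + i + 1)).comp_add_const (a + i) 1).comp_add_const
      a i).mul_const (w i)
  rw [show (fun b => laguerreL b n x) = _ from funext fun b => laguerreL_eq_sum b n x]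
  refine (HasDerivAt.fun_sum hterm).congr_deriv ?_
  symm
  calc ∑ s ∈ range n, 1 / ((n : ℝ) - s) * laguerreL a s x
      = ∑ s ∈ range n, ∑ i ∈ range (s + 1), c i (s - i) * w i := by
        refine sum_congr rfl fun s hs => ?_
        rw [laguerreL_eq_sum, mul_sum]
        refine sum_congr rfl fun i hi => ?_
        have hin : i ≤ n := by linarith [mem_range.1 hs, mem_range.1 hi]
        have his : i ≤ s := Nat.lt_succ_iff.1 (mem_range.1 hi)
        simp only [c, w, Nat.cast_sub hin, Nat.cast_sub his]
        ring_nf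
    _ = ∑ i ∈ range n, (∑ t ∈ range (n - i), c i t) * w i := by
        rw [sum_range_diag_flip n fun i t => c i t * w i]
        simp only [sum_mul]
    _ = ∑ i ∈ range (n + 1), (∑ t ∈ range (n - i), c i t) * w i := by
        simp [sum_range_succ]

theorem ljP_hasDerivAt_param_alpha_general
    (β : ℝ) (n k : ℕ)
    (α : ℝ) (x : ℝ) (y : ℝ) :
    HasDerivAt (fun a : ℝ => ljP a β n k x y)
      (∑ s ∈ Finset.range (n - k), (1 / ((n : ℝ) - k - s)) * ljP α β (k + s) k x y) α := by
  have h := ((((hasDerivAt_laguerreL (n - k) x (α + 2 * k + 1)).comp_add_const (α + 2 * k) 1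
    ).comp_add_const α (2 * k)).mul_const (x ^ k)).mul_const (jacobiP β 0 k (y / x))
  refine h.congr_deriv ?_
  rw [sum_mul, sum_mul]
  refine sum_congr rfl fun s hs => ?_
  have hkn : k ≤ n := by linarith [Nat.lt_sub_iff_add_lt.1 (mem_range.1 hs)]
  rw [ljP, Nat.add_sub_cancel_left, Nat.cast_sub hkn]
  ring

/-- Parameter derivative with respect to `α` of the Laguerre–Jacobi Koornwinder polynomials. -/
theorem ljP_hasDerivAt_param_alpha
    (β : ℝ) (hβ : β > -1) (n k : ℕ) (hk : 0 ≤ k) (hkn : k + 1 ≤ n)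
    (α : ℝ) (hα : α > -1) (x : ℝ) (hx : 0 < x) (y : ℝ) :
    HasDerivAt (fun a : ℝ => ljP a β n k x y)
      (∑ s ∈ Finset.range (n - k), (1 / ((n : ℝ) - k - s)) * ljP α β (k + s) k x y) α :=
  ljP_hasDerivAt_param_alpha_general β n k α x y
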